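/- Let γ > 1, ε ∈ ℝ, μ = √(4π), c_h > 0, and define on ℝ², with r² = (x−5)² + (y−5)²: ρ = 1, velocity v⃗ = (u, v) = (ε/(2π))·e^{(1−r²)/2}·(−(y−5), x−5), magnetic field B⃗ = (B_x, B_y) = (μ/(2π))·e^{(1−r²)/2}·(−(y−5), x−5), B_z = 0, w = 0, ψ = 0, and p = 1 + (1/(32π³))·(μ²(1−r²) − 4ε²π)·e^{1−r²}. Set p_t = p + (B_x²+B_y²)/(8π) and ρE = p/(γ−1) + ρ(u²+v²)/2 + (B_x²+B_y²)/(8π). Then these time-independent fields satisfy all equations of the two-dimensional ideal MHD system with hyperbolic divergence cleaning at every point of ℝ²: ∂_x(ρu) + ∂_y(ρv) = 0; ∂_x(ρu² + p_t − B_x²/(4π)) + ∂_y(ρuv − B_xB_y/(4π)) = 0; ∂_x(ρuv − B_xB_y/(4π)) + ∂_y(ρv² + p_t − B_y²/(4π)) = 0; ∂_x(u(ρE+p_t) − B_x(uB_x+vB_y)/(4π)) + ∂_y(v(ρE+p_t) − B_y(uB_x+vB_y)/(4π)) = 0; ∂_x(ψ) + ∂_y(vB_x − B_yu) = 0 and ∂_x(uB_y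 − B_xv) + ∂_y(ψ) = 0; and c_h²·(∂_x B_x + ∂_y B_y) = 0. -/

import Mathlib

noncomputable section

/-- Partial derivative in the first (x) variable. -/
def pdX (F : ℝ → ℝ → ℝ) (x y : ℝ) : ℝ := deriv (fun s => F s y) x

/-- Partial derivative in the second (y) variable. -/
def pdY (F : ℝ → ℝ → ℝ) (x y : ℝ) : ℝ := deriv (fun s => F x s) y

/-- Squared distance to the vortex center `(5,5)`. -/
def mr2 (x y : ℝ) : ℝ := (x - 5) ^ 2 + (y - 5) ^ 2

/-- x-velocity of the MHD vortex. -/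
def mU (ε x y : ℝ) : ℝ := (ε / (2 * Real.pi)) * Real.exp ((1 - mr2 x y) / 2) * (-(y - 5))

/-- y-velocity of the MHD vortex. -/
def mV (ε x y : ℝ) : ℝ := (ε / (2 * Real.pi)) * Real.exp ((1 - mr2 x y) / 2) * (x - 5)

/-- x-component of the magnetic field of the MHD vortex. -/
def mBx (μ x y : ℝ) : ℝ := (μ / (2 * Real.pi)) * Real.exp ((1 - mr2 x y) / 2) * (-(y - 5))

/-- y-component of the magnetic field of the MHD vortex. -/
def mBy (μ x y : ℝ) : ℝ := (μ / (2 * Real.pi)) * Real.exp ((1 - mr2 x y) / 2) * (x - 5)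

/-- Gas pressure of the MHD vortex. -/
def mP (ε μ x y : ℝ) : ℝ :=
  1 + (1 / (32 * Real.pi ^ 3)) * (μ ^ 2 * (1 - mr2 x y) - 4 * ε ^ 2 * Real.pi)
        * Real.exp (1 - mr2 x y)

/-- Total pressure `p_t = p + |B|²/(8π)` of the MHD vortex. -/
def mPt (ε μ x y : ℝ) : ℝ :=
  mP ε μ x y + (mBx μ x y ^ 2 + mBy μ x y ^ 2) / (8 * Real.pi)

/-- Total energy density `ρE = p/(γ−1) + ρ|v|²/2 + |B|²/(8π)` of the MHD vortex (ρ = 1). -/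
def mE (γ ε μ x y : ℝ) : ℝ :=
  mP ε μ x y / (γ - 1) + 1 * (mU ε x y ^ 2 + mV ε x y ^ 2) / 2
    + (mBx μ x y ^ 2 + mBy μ x y ^ 2) / (8 * Real.pi)


lemma hEa (k x : ℝ) : HasDerivAt (fun s : ℝ => Real.exp ((1 - ((s - 5) ^ 2 + k)) / 2))
    (-(x - 5) * Real.exp ((1 - ((x - 5) ^ 2 + k)) / 2)) x := by
  have h1 : HasDerivAt (fun s : ℝ => (1 - ((s - 5) ^ 2 + k)) / 2) (-(x - 5)) x :=
    ((((((hasDerivAt_id x).sub_const 5).pow 2).add_const k).const_sub 1).div_const 2).congr_deriv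
      (by simp only [id_eq]; push_cast; ring)
  exact h1.exp.congr_deriv (by ring)

lemma hEb (k y : ℝ) : HasDerivAt (fun s : ℝ => Real.exp ((1 - (k + (s - 5) ^ 2)) / 2))
    (-(y - 5) * Real.exp ((1 - (k + (y - 5) ^ 2)) / 2)) y := by
  have h1 : HasDerivAt (fun s : ℝ => (1 - (k + (s - 5) ^ 2)) / 2) (-(y - 5)) y :=
    (((((((hasDerivAt_id y).sub_const 5).pow 2).const_add k).const_sub 1).div_const 2)).congr_deriv
      (by simp only [id_eq]; push_cast; ring)
  exact h1.exp.congr_deriv (by ring)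

lemma hE2a (k x : ℝ) : HasDerivAt (fun s : ℝ => Real.exp (1 - ((s - 5) ^ 2 + k)))
    (-2 * (x - 5) * Real.exp (1 - ((x - 5) ^ 2 + k))) x := by
  have h1 : HasDerivAt (fun s : ℝ => 1 - ((s - 5) ^ 2 + k)) (-2 * (x - 5)) x :=
    (((((hasDerivAt_id x).sub_const 5).pow 2).add_const k).const_sub 1).congr_deriv
      (by simp only [id_eq]; push_cast; ring)
  exact h1.exp.congr_deriv (by ring)

lemma hE2b (k y : ℝ) : HasDerivAt (fun s : ℝ => Real.exp (1 - (k + (s - 5) ^ 2)))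
    (-2 * (y - 5) * Real.exp (1 - (k + (y - 5) ^ 2))) y := by
  have h1 : HasDerivAt (fun s : ℝ => 1 - (k + (s - 5) ^ 2)) (-2 * (y - 5)) y :=
    ((((((hasDerivAt_id y).sub_const 5).pow 2).const_add k).const_sub 1)).congr_deriv
      (by simp only [id_eq]; push_cast; ring)
  exact h1.exp.congr_deriv (by ring)

lemma dUx (c x y : ℝ) : HasDerivAt (fun s => mU c s y)
    (c / (2 * Real.pi) * Real.exp ((1 - mr2 x y) / 2) * ((x - 5) * (y - 5))) x :=
  (((hEa ((y - 5) ^ 2) x).const_mul (c / (2 * Real.pi))).mul_const (-(y - 5))).congr_deriv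
    (by simp only [mr2]; ring)

lemma dVx (c x y : ℝ) : HasDerivAt (fun s => mV c s y)
    (c / (2 * Real.pi) * Real.exp ((1 - mr2 x y) / 2) * (1 - (x - 5) ^ 2)) x :=
  (((hEa ((y - 5) ^ 2) x).const_mul (c / (2 * Real.pi))).mul
      ((hasDerivAt_id x).sub_const 5)).congr_deriv
    (by simp only [mr2, id_eq]; ring)

lemma dUy (c x y : ℝ) : HasDerivAt (fun s => mU c x s)
    (c / (2 * Real.pi) * Real.exp ((1 - mr2 x y) / 2) * ((y - 5) ^ 2 - 1)) y :=
  (((hEb ((x - 5) ^ 2) y).const_mul (c / (2 * Real.pi))).mul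
      (((hasDerivAt_id y).sub_const 5).neg)).congr_deriv
    (by simp only [mr2, id_eq, Pi.neg_apply]; ring)

lemma dVy (c x y : ℝ) : HasDerivAt (fun s => mV c x s)
    (-(c / (2 * Real.pi)) * Real.exp ((1 - mr2 x y) / 2) * ((x - 5) * (y - 5))) y :=
  (((hEb ((x - 5) ^ 2) y).const_mul (c / (2 * Real.pi))).mul_const (x - 5)).congr_deriv
    (by simp only [mr2]; ring)

lemma dBxx (c x y : ℝ) : HasDerivAt (fun s => mBx c s y)
    (c / (2 * Real.pi) * Real.exp ((1 - mr2 x y) / 2) * ((x - 5) * (y - 5))) x := dUx c x y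

lemma dByx (c x y : ℝ) : HasDerivAt (fun s => mBy c s y)
    (c / (2 * Real.pi) * Real.exp ((1 - mr2 x y) / 2) * (1 - (x - 5) ^ 2)) x := dVx c x y

lemma dBxy (c x y : ℝ) : HasDerivAt (fun s => mBx c x s)
    (c / (2 * Real.pi) * Real.exp ((1 - mr2 x y) / 2) * ((y - 5) ^ 2 - 1)) y := dUy c x y

lemma dByy (c x y : ℝ) : HasDerivAt (fun s => mBy c x s)
    (-(c / (2 * Real.pi)) * Real.exp ((1 - mr2 x y) / 2) * ((x - 5) * (y - 5))) y := dVy c x y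

lemma dPx (ε μ x y : ℝ) : HasDerivAt (fun s => mP ε μ s y)
    ((1 / (32 * Real.pi ^ 3)) * (-2 * (x - 5)) * (μ ^ 2 * (2 - mr2 x y) - 4 * ε ^ 2 * Real.pi)
      * Real.exp (1 - mr2 x y)) x := by
  have hA : HasDerivAt (fun s => μ ^ 2 * (1 - mr2 s y) - 4 * ε ^ 2 * Real.pi)
      (μ ^ 2 * (-2 * (x - 5))) x :=
    ((((((hasDerivAt_id x).sub_const 5).pow 2).add_const ((y - 5) ^ 2)).const_sub 1).const_mul
        (μ ^ 2)).sub_const _ |>.congr_deriv (by simp only [id_eq]; push_cast; ring)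
  exact (((hA.const_mul (1 / (32 * Real.pi ^ 3))).mul (hE2a ((y - 5) ^ 2) x)).const_add 1).congr_deriv
    (by simp only [mr2]; ring)

lemma dPy (ε μ x y : ℝ) : HasDerivAt (fun s => mP ε μ x s)
    ((1 / (32 * Real.pi ^ 3)) * (-2 * (y - 5)) * (μ ^ 2 * (2 - mr2 x y) - 4 * ε ^ 2 * Real.pi)
      * Real.exp (1 - mr2 x y)) y := by
  have hA : HasDerivAt (fun s => μ ^ 2 * (1 - mr2 x s) - 4 * ε ^ 2 * Real.pi)
      (μ ^ 2 * (-2 * (y - 5))) y :=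
    ((((((hasDerivAt_id y).sub_const 5).pow 2).const_add ((x - 5) ^ 2)).const_sub 1).const_mul
        (μ ^ 2)).sub_const _ |>.congr_deriv (by simp only [id_eq]; push_cast; ring)
  exact (((hA.const_mul (1 / (32 * Real.pi ^ 3))).mul (hE2b ((x - 5) ^ 2) y)).const_add 1).congr_deriv
    (by simp only [mr2]; ring)

set_option maxHeartbeats 2000000 in
/-- with `μ = √(4π)`, the Balsara MHD vortex (unit density, ψ = 0, B_z = 0)
is a stationary solution of the 2D ideal MHD system with hyperbolic divergence cleaning:
all spatial flux divergences vanish and the field is divergence-free, at every point of ℝ². -/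
theorem stmt_11 (γ ε μ c_h : ℝ) (hγ : 1 < γ)
    (hμ : μ = Real.sqrt (4 * Real.pi)) (hch : 0 < c_h) :
    ∀ x y : ℝ,
      -- mass conservation
      (pdX (fun a b => 1 * mU ε a b) x y + pdY (fun a b => 1 * mV ε a b) x y = 0)
      ∧ -- x-momentum
      (pdX (fun a b => 1 * mU ε a b ^ 2 + mPt ε μ a b - mBx μ a b ^ 2 / (4 * Real.pi)) x y
        + pdY (fun a b => 1 * mU ε a b * mV ε a b
            - mBx μ a b * mBy μ a b / (4 * Real.pi)) x y = 0)
      ∧ -- y-momentum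
      (pdX (fun a b => 1 * mU ε a b * mV ε a b
            - mBx μ a b * mBy μ a b / (4 * Real.pi)) x y
        + pdY (fun a b => 1 * mV ε a b ^ 2 + mPt ε μ a b
            - mBy μ a b ^ 2 / (4 * Real.pi)) x y = 0)
      ∧ -- energy
      (pdX (fun a b => mU ε a b * (mE γ ε μ a b + mPt ε μ a b)
            - mBx μ a b * (mU ε a b * mBx μ a b + mV ε a b * mBy μ a b) / (4 * Real.pi)) x y
        + pdY (fun a b => mV ε a b * (mE γ ε μ a b + mPt ε μ a b)
            - mBy μ a b * (mU ε a b * mBx μ a b + mV ε a b * mBy μ a b) / (4 * Real.pi)) x y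
        = 0)
      ∧ -- induction, B_x component (with ψ = 0)
      (pdX (fun _ _ => (0 : ℝ)) x y
        + pdY (fun a b => mV ε a b * mBx μ a b - mBy μ a b * mU ε a b) x y = 0)
      ∧ -- induction, B_y component (with ψ = 0)
      (pdX (fun a b => mU ε a b * mBy μ a b - mBx μ a b * mV ε a b) x y
        + pdY (fun _ _ => (0 : ℝ)) x y = 0)
      ∧ -- divergence-free constraint / cleaning equation
      (c_h ^ 2 * (pdX (fun a b => mBx μ a b) x y + pdY (fun a b => mBy μ a b) x y) = 0) := by

  intro x y
  have hg : γ - 1 ≠ 0 := sub_ne_zero.mpr hγ.ne'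
  have hEF : Real.exp (1 - ((x - 5) ^ 2 + (y - 5) ^ 2))
      = Real.exp ((1 - ((x - 5) ^ 2 + (y - 5) ^ 2)) / 2)
        * Real.exp ((1 - ((x - 5) ^ 2 + (y - 5) ^ 2)) / 2) := by
    rw [← Real.exp_add]; ring_nf
  have hUx := dUx ε x y
  have hVx := dVx ε x y
  have hUy := dUy ε x y
  have hVy := dVy ε x y
  have hBxx := dBxx μ x y
  have hByx := dByx μ x y
  have hBxy := dBxy μ x y
  have hByy := dByy μ x y
  have hPx := dPx ε μ x y
  have hPy := dPy ε μ x y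
  have hPtx := hPx.add (((hBxx.pow 2).add (hByx.pow 2)).div_const (8 * Real.pi))
  have hPty := hPy.add (((hBxy.pow 2).add (hByy.pow 2)).div_const (8 * Real.pi))
  have hEx := ((hPx.div_const (γ - 1)).add
      ((((hUx.pow 2).add (hVx.pow 2)).const_mul 1).div_const 2)).add
      (((hBxx.pow 2).add (hByx.pow 2)).div_const (8 * Real.pi))
  have hEy := ((hPy.div_const (γ - 1)).add
      ((((hUy.pow 2).add (hVy.pow 2)).const_mul 1).div_const 2)).add
      (((hBxy.pow 2).add (hByy.pow 2)).div_const (8 * Real.pi))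
  refine ⟨?_, ?_, ?_, ?_, ?_, ?_, ?_⟩
  · -- mass
    simp only [pdX, pdY]
    rw [(hUx.const_mul 1).deriv, (hVy.const_mul 1).deriv]
    ring
  · -- x-momentum
    simp only [pdX, pdY, mPt]
    erw [((((hUx.pow 2).const_mul 1).add hPtx).sub
        ((hBxx.pow 2).div_const (4 * Real.pi))).deriv,
      ((((hUy.const_mul 1).mul hVy).sub
        ((hBxy.mul hByy).div_const (4 * Real.pi)))).deriv]
    simp only [mU, mV, mBx, mBy, mr2, hEF]
    simp only [Nat.cast_ofNat, show (2:ℕ) - 1 = 1 from rfl, pow_one]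
    field_simp
    ring
  · -- y-momentum
    simp only [pdX, pdY, mPt]
    erw [((((hUx.const_mul 1).mul hVx).sub
        ((hBxx.mul hByx).div_const (4 * Real.pi)))).deriv,
      ((((hVy.pow 2).const_mul 1).add hPty).sub
        ((hByy.pow 2).div_const (4 * Real.pi))).deriv]
    simp only [mU, mV, mBx, mBy, mr2, hEF]
    simp only [Nat.cast_ofNat, show (2:ℕ) - 1 = 1 from rfl, pow_one]
    field_simp
    ring
  · -- energy
    simp only [pdX, pdY, mPt, mE]
    erw [((hUx.mul (hEx.add hPtx)).sub
        ((hBxx.mul ((hUx.mul hBxx).add (hVx.mul hByx))).div_const (4 * Real.pi))).deriv,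
      ((hVy.mul (hEy.add hPty)).sub
        ((hByy.mul ((hUy.mul hBxy).add (hVy.mul hByy))).div_const (4 * Real.pi))).deriv]
    simp only [mU, mV, mBx, mBy, mP, mr2, hEF, Pi.add_apply, Pi.pow_apply, Pi.mul_apply]
    simp only [Nat.cast_ofNat, show (2:ℕ) - 1 = 1 from rfl, pow_one]
    field_simp
    ring
  · -- induction Bx
    simp only [pdX, pdY]
    erw [deriv_const, ((hVy.mul hBxy).sub (hByy.mul hUy)).deriv]
    simp only [mU, mV, mBx, mBy, mr2]
    ring
  · -- induction By
    simp only [pdX, pdY]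
    erw [deriv_const, ((hUx.mul hByx).sub (hBxx.mul hVx)).deriv]
    simp only [mU, mV, mBx, mBy, mr2]
    ring
  · -- divergence constraint
    simp only [pdX, pdY]
    rw [hBxx.deriv, hByy.deriv]
    ring
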